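/- Let K be a field of characteristic zero and let n ≥ 3 be odd. Then the nilpotent matrices M = Σ_{i=1}^{n−1} E_{i,i+1} (the upper shift matrix) and N = E_{n1} generate the Lie algebra sl_n(K). -/

import Mathlib

attribute [local instance 100] LieRing.ofAssociativeRing

/-!
Write `n = m + 1`, `M` for the upper shift and `N = E_{m,0}`. By Pascal's rule,
`(ad M)^k N` is the band matrix with entry `(-1)^j C(k, j)` at `(i, j)` when `i + k = m + j`, so
`H = (ad M)^m N` is diagonal with entries `h_j = (-1)^j C(m, j)`. Hence `ad H` acts on the
summand `E_{j,j+1}` of `M` by the scalar `h_j - h_{j+1} = (-1)^j C(n, j + 1)`. For odd `n` these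
scalars are pairwise distinct (the sign separates the parities, and `C(n, a) = C(n, b)` forces
`a = b` or `a + b = n`), so each `E_{j,j+1}` lies in the generated subalgebra. Brackets of these
with `N` give every off-diagonal matrix unit, and these generate `sl_n`.
-/

open Matrix LieAlgebra

namespace Nat

theorem choose_lt_choose_succ {n k : ℕ} (h : 2 * k + 1 < n) : n.choose k < n.choose (k + 1) := by
  have hpos : 0 < n.choose k := choose_pos (by omega)
  have := choose_succ_right_eq n k
  nlinarith [Nat.mul_lt_mul_of_pos_left (show k + 1 < n - k by omega) hpos]

theorem choose_strictMonoOn (n : ℕ) : StrictMonoOn n.choose (Set.Iic (n / 2)) :=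
  strictMonoOn_Iic_of_lt_succ fun k hk => by
    rw [Order.succ_eq_add_one]
    exact choose_lt_choose_succ (by omega)

theorem eq_or_add_eq_of_choose_eq {n a b : ℕ} (ha : a ≤ n) (hb : b ≤ n)
    (h : n.choose a = n.choose b) : a = b ∨ a + b = n := by
  have inj := (choose_strictMonoOn n).injOn
  have ha' := choose_symm ha
  have hb' := choose_symm hb
  rcases le_or_gt a (n / 2) with ha2 | ha2 <;> rcases le_or_gt b (n / 2) with hb2 | hb2
  · exact .inl (inj ha2 hb2 h)
  · have := inj (x₁ := a) (x₂ := n - b) ha2 (by simp only [Set.mem_Iic]; omega) (by omega)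
    omega
  · have := inj (x₁ := n - a) (x₂ := b) (by simp only [Set.mem_Iic]; omega) hb2 (by omega)
    omega
  · have := inj (x₁ := n - a) (x₂ := n - b) (by simp only [Set.mem_Iic]; omega)
      (by simp only [Set.mem_Iic]; omega) (by omega)
    omega

end Nat

theorem neg_one_pow_mul_choose_injOn {R : Type*} [Ring R] [CharZero R] {n : ℕ} (hn : Odd n) :
    Set.InjOn (fun j => (-1 : R) ^ j * n.choose j) (Set.Iic n) := by
  intro a ha b hb h
  have hca := Nat.choose_pos (Set.mem_Iic.1 ha)
  have hcb := Nat.choose_pos (Set.mem_Iic.1 hb)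
  obtain ⟨hparity, hchoose⟩ : (Even a ↔ Even b) ∧ n.choose a = n.choose b := by
    rcases Nat.even_or_odd a with ha | ha <;> rcases Nat.even_or_odd b with hb | hb <;>
      simp only [ha.neg_one_pow, hb.neg_one_pow, one_mul, neg_one_mul, neg_inj, Nat.cast_inj] at h
    · exact ⟨by simp [ha, hb], h⟩
    · rw [eq_neg_iff_add_eq_zero] at h; norm_cast at h; omega
    · rw [neg_eq_iff_add_eq_zero] at h; norm_cast at h; omega
    · exact ⟨by simp [ha, hb, ← Nat.not_odd_iff_even], h⟩
  rcases Nat.eq_or_add_eq_of_choose_eq ha hb hchoose with hab | hab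
  · exact hab
  · rw [← hab] at hn
    exact absurd (Nat.even_add.2 hparity) (Nat.not_even_iff_odd.2 hn)

open Finset in
theorem Submodule.mem_of_sum_mem_of_apply_eq_smul {K V ι : Type*} [Field K] [AddCommGroup V]
    [Module K V] {p : Submodule K V} {f : Module.End K V} (hp : ∀ x ∈ p, f x ∈ p)
    {s : Finset ι} {μ : ι → K} (hμ : Set.InjOn μ s) {v : ι → V}
    (hv : ∀ i ∈ s, f (v i) = μ i • v i) (hsum : ∑ i ∈ s, v i ∈ p) {i : ι}
    (hi : i ∈ s) : v i ∈ p := by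
  classical
  induction s using Finset.induction_on generalizing v i with
  | empty => simp at hi
  | insert j s hj ih =>
    rw [sum_insert hj] at hsum
    have hs : ∀ i ∈ s, v i ∈ p := by
      intro i hi
      have hne : μ i - μ j ≠ 0 :=
        sub_ne_zero.2 fun h => hj (hμ (mem_insert_of_mem hi) (mem_insert_self j s) h ▸ hi)
      -- `f - μ j` kills `v j` and rescales every other `v i` by `μ i - μ j ≠ 0`
      have hscaled : ∑ i ∈ s, (μ i - μ j) • v i =
          f (v j + ∑ i ∈ s, v i) - μ j • (v j + ∑ i ∈ s, v i) := by
        rw [map_add, map_sum, hv j (mem_insert_self j s), smul_add, smul_sum]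
        simp only [sub_smul, sum_sub_distrib]
        rw [sum_congr rfl fun i hi => hv i (mem_insert_of_mem hi)]
        abel
      have := ih (hμ.mono (by simp)) (v := fun i => (μ i - μ j) • v i)
        (fun i hi => by rw [map_smul, hv i (mem_insert_of_mem hi), smul_comm])
        (hscaled ▸ p.sub_mem (hp _ hsum) (p.smul_mem _ hsum)) hi
      simpa [hne] using p.smul_mem (μ i - μ j)⁻¹ this
    rcases mem_insert.1 hi with rfl | hi
    · simpa using p.sub_mem hsum (p.sum_mem hs)
    · exact hs i hi

section MatrixUnits

variable {ι R : Type*} [Fintype ι] [DecidableEq ι] [CommRing R]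

theorem Matrix.lie_diagonal_single (d : ι → R) (i j : ι) (c : R) :
    ⁅diagonal d, single i j c⁆ = (d i - d j) • single i j c := by
  ext a b
  simp only [Ring.lie_def, Matrix.sub_apply, diagonal_mul, mul_diagonal, smul_apply, single_apply,
    smul_eq_mul]
  split_ifs with h
  · rw [h.1, h.2]; ring
  · simp

theorem Matrix.lie_single_single_of_ne {i k : ι} (j : ι) (hik : i ≠ k) (c : R) :
    ⁅single i j c, single j k 1⁆ = single i k c := by
  rw [Ring.lie_def, single_mul_single_same, single_mul_single_of_ne (h := hik.symm), mul_one,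
    sub_zero]

theorem Matrix.lie_single_single_self (i j : ι) (c : R) :
    ⁅single i j c, single j i 1⁆ = single i i c - single j j c := by
  rw [Ring.lie_def, single_mul_single_same, single_mul_single_same, mul_one, one_mul]

theorem LieAlgebra.SpecialLinear.sl_le_of_single_mem {L : LieSubalgebra R (Matrix ι ι R)}
    (h : ∀ i j, i ≠ j → Matrix.single i j 1 ∈ L) : sl ι R ≤ L := by
  intro X hX
  rcases isEmpty_or_nonempty ι with hι | ⟨⟨i₀⟩⟩
  · rw [Subsingleton.elim X 0]; exact L.zero_mem
  have hsingle (i j : ι) (hij : i ≠ j) (c : R) : Matrix.single i j c ∈ L := by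
    simpa using L.smul_mem c (h i j hij)
  have hdiag (i : ι) (c : R) : Matrix.single i i c - Matrix.single i₀ i₀ c ∈ L := by
    by_cases hi : i = i₀
    · simp [hi, L.zero_mem]
    · rw [← Matrix.lie_single_single_self]
      exact L.lie_mem (hsingle i i₀ hi c) (h i₀ i (Ne.symm hi))
  have htrace : ∑ i, X i i = 0 := hX
  -- the correction terms `E_{i₀ i₀}` add up to `trace X • E_{i₀ i₀} = 0`
  have hdecomp : X = ∑ i, ∑ j,
      (Matrix.single i j (X i j) - if i = j then Matrix.single i₀ i₀ (X i i) else 0) := by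
    simp only [Finset.sum_sub_distrib, Finset.sum_ite_eq, Finset.mem_univ, if_true,
      ← matrix_eq_sum_single]
    have hcorr : ∑ i, Matrix.single i₀ i₀ (X i i) = Matrix.single i₀ i₀ (∑ i, X i i) :=
      (map_sum (singleAddMonoidHom (α := R) i₀ i₀) _ _).symm
    rw [hcorr, htrace, single_zero, sub_zero]
  rw [hdecomp]
  refine sum_mem fun i _ => sum_mem fun j _ => ?_
  by_cases hij : i = j
  · subst hij; simpa using hdiag i (X i i)
  · simpa [hij] using hsingle i j hij (X i j)

end MatrixUnits

theorem single_mem_of_single_castSucc_succ_mem {m : ℕ} {R : Type*} [CommRing R]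
    {L : LieSubalgebra R (Matrix (Fin (m + 1)) (Fin (m + 1)) R)}
    (hsucc : ∀ i : Fin m, single i.castSucc i.succ 1 ∈ L)
    (hlast : single (Fin.last m) 0 1 ∈ L)
    {i j : Fin (m + 1)} (hij : i ≠ j) : single i j 1 ∈ L := by
  have trans {a c : Fin (m + 1)} (b : Fin (m + 1)) (hac : a ≠ c) (hab : single a b 1 ∈ L)
      (hbc : single b c 1 ∈ L) : single a c 1 ∈ L := by
    simpa [lie_single_single_of_ne b hac] using L.lie_mem hab hbc
  have upper (b : Fin (m + 1)) : ∀ a < b, single a b 1 ∈ L := by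
    induction b using Fin.induction with
    | zero => exact fun a ha => absurd ha (Fin.not_lt_zero a)
    | succ b ih =>
      intro a ha
      rcases (Fin.le_castSucc_iff.2 ha).lt_or_eq with hab | rfl
      · exact trans b.castSucc ha.ne (ih a hab) (hsucc b)
      · exact hsucc b
  have lower (a : Fin (m + 1)) (ha : 0 < a) : single a 0 1 ∈ L := by
    rcases (Fin.le_last a).lt_or_eq with h | rfl
    · exact trans (Fin.last m) ha.ne' (upper _ a h) hlast
    · exact hlast
  rcases hij.lt_or_gt with h | h
  · exact upper j i h
  · rcases (Fin.zero_le j).lt_or_eq with hj | rfl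
    · exact trans 0 hij (lower i (hj.trans h)) (upper j 0 hj)
    · exact lower i h

def upperShift (n : ℕ) (R : Type*) [Zero R] [One R] : Matrix (Fin n) (Fin n) R :=
  of fun i j => if (i : ℕ) + 1 = j then 1 else 0

section UpperShift

variable {n : ℕ} {R : Type*}

theorem upperShift_mul_apply [NonAssocSemiring R] (A : Matrix (Fin n) (Fin n) R) (i j : Fin n) :
    (upperShift n R * A) i j = if h : (i : ℕ) + 1 < n then A ⟨i + 1, h⟩ j else 0 := by
  rw [mul_apply]
  split_ifs with h
  · rw [Finset.sum_eq_single ⟨i + 1, h⟩] <;>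
      simp +contextual [upperShift, Fin.ext_iff, eq_comm]
  · refine Finset.sum_eq_zero fun l _ => ?_
    simp only [upperShift, of_apply, ite_mul, one_mul, zero_mul]
    exact if_neg (by omega)

theorem mul_upperShift_apply [NonAssocSemiring R] (A : Matrix (Fin n) (Fin n) R) (i j : Fin n) :
    (A * upperShift n R) i j = if h : 0 < (j : ℕ) then A i ⟨j - 1, by omega⟩ else 0 := by
  rw [mul_apply]
  split_ifs with h
  · rw [Finset.sum_eq_single ⟨j - 1, by omega⟩] <;> simp +contextual [upperShift, Fin.ext_iff]
    all_goals omega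
  · refine Finset.sum_eq_zero fun l _ => ?_
    simp only [upperShift, of_apply, mul_ite, mul_one, mul_zero]
    exact if_neg (by omega)

theorem upperShift_eq_sum_single [AddCommMonoidWithOne R] (m : ℕ) :
    upperShift (m + 1) R = ∑ i : Fin m, single i.castSucc i.succ 1 := by
  ext a b
  simp [upperShift, Matrix.sum_apply, single_apply, Fin.ext_iff]
  split_ifs with h
  · rw [Finset.card_eq_one.2 ⟨⟨a, by omega⟩, by ext; simp [Fin.ext_iff]; omega⟩,
      Nat.cast_one]
  · rw [Finset.card_eq_zero.2 (by ext; simp; omega), Nat.cast_zero]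

theorem trace_upperShift [AddCommMonoidWithOne R] : (upperShift n R).trace = 0 :=
  Finset.sum_eq_zero fun i _ => if_neg (by omega)

theorem ad_upperShift_pow_single_last [CommRing R] (m k : ℕ) :
    (ad R _ (upperShift (m + 1) R) ^ k) (single (Fin.last m) 0 1) =
      of fun i j : Fin (m + 1) =>
        if (i : ℕ) + k = m + j then (-1) ^ (j : ℕ) * (k.choose j : R) else 0 := by
  induction k with
  | zero =>
    ext ⟨i, hi⟩ ⟨j, hj⟩
    rcases j with _ | j <;> simp [single_apply, Fin.ext_iff, eq_comm]
  | succ k ih =>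
    ext ⟨i, hi⟩ ⟨j, hj⟩
    rw [pow_succ', Module.End.mul_apply, ih, ad_apply, Ring.lie_def, Matrix.sub_apply,
      upperShift_mul_apply, mul_upperShift_apply]
    rcases j with _ | j
    · simp only [of_apply]
      split_ifs <;> first | omega | simp
    · simp only [of_apply, Nat.choose_succ_succ', pow_succ, Nat.add_sub_cancel]
      split_ifs <;> try omega
      · push_cast; ring
      · rw [sub_self]
      · rw [Nat.choose_eq_zero_of_lt (by omega : k < j + 1)]; push_cast; ring
      · rw [sub_self]

theorem ad_upperShift_pow_self_single_last [CommRing R] (m : ℕ) :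
    (ad R _ (upperShift (m + 1) R) ^ m) (single (Fin.last m) 0 1) =
      diagonal fun j : Fin (m + 1) => (-1) ^ (j : ℕ) * (m.choose j : R) := by
  rw [ad_upperShift_pow_single_last]
  ext i j
  simp only [of_apply, diagonal_apply, Fin.ext_iff]
  split_ifs <;> first | omega | simp_all [add_comm]

end UpperShift

theorem single_castSucc_succ_mem {K : Type*} [Field K] [CharZero K] {m : ℕ} (hm : Even m)
    {L : LieSubalgebra K (Matrix (Fin (m + 1)) (Fin (m + 1)) K)} (hM : upperShift (m + 1) K ∈ L)
    (hN : single (Fin.last m) 0 1 ∈ L) (i : Fin m) : single i.castSucc i.succ 1 ∈ L := by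
  have hH := ((ad K L ⟨_, hM⟩ ^ m) ⟨_, hN⟩).2
  rw [LieSubalgebra.coe_ad_pow, ad_upperShift_pow_self_single_last] at hH
  refine Submodule.mem_of_sum_mem_of_apply_eq_smul (p := L.toSubmodule) (f := ad K _ _)
    (fun x hx => L.lie_mem hH hx) (s := Finset.univ)
    (μ := fun j : Fin m => (-1) ^ (j : ℕ) * ((m + 1).choose (j + 1) : K))
    (v := fun j => single j.castSucc j.succ 1) ?_ ?_ (upperShift_eq_sum_single (R := K) m ▸ hM)
    (Finset.mem_univ i)
  · intro a _ b _ hab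
    have := neg_one_pow_mul_choose_injOn (R := K) (n := m + 1) hm.add_one
      (x₁ := a + 1) (x₂ := b + 1) (by simp) (by simp) (by simpa [pow_succ] using hab)
    exact Fin.ext (by omega)
  · intro j _
    rw [ad_apply, lie_diagonal_single]
    congr 1
    simp [Nat.choose_succ_succ', pow_succ]
    ring

/-- In characteristic zero, for odd `n ≥ 3`, the upper shift matrix `M = ∑ E_{i,i+1}` and
`N = E_{n,1}` generate `sl_n(K)`. -/
theorem stmt_13 {K : Type} [Field K] [CharZero K] (n : ℕ) (hn : 3 ≤ n) (hodd : Odd n) :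
    LieSubalgebra.lieSpan K (Matrix (Fin n) (Fin n) K)
      {Matrix.of fun i j : Fin n => if (i : ℕ) + 1 = (j : ℕ) then (1 : K) else 0,
       Matrix.of fun i j : Fin n =>
        if (i : ℕ) = n - 1 ∧ (j : ℕ) = 0 then (1 : K) else 0} =
      LieAlgebra.SpecialLinear.sl (Fin n) K := by
  obtain ⟨m, rfl⟩ : ∃ m, n = m + 1 := ⟨n - 1, by omega⟩
  have hm : Even m := by simpa [Nat.odd_add_one] using hodd
  have hN : single (Fin.last m) 0 1 = of fun i j : Fin (m + 1) =>
      if (i : ℕ) = m + 1 - 1 ∧ (j : ℕ) = 0 then (1 : K) else 0 := by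
    ext ⟨i, hi⟩ ⟨j, hj⟩
    simp only [of_apply, single_apply, Fin.ext_iff, Fin.val_last, Fin.val_zero, Nat.add_sub_cancel]
    exact if_congr (by omega) rfl rfl
  change LieSubalgebra.lieSpan K _ {upperShift (m + 1) K, _} = _
  rw [← hN]
  set L := LieSubalgebra.lieSpan K _ {upperShift (m + 1) K, single (Fin.last m) 0 1}
  have hML : upperShift (m + 1) K ∈ L := LieSubalgebra.subset_lieSpan (by simp)
  have hNL : single (Fin.last m) 0 1 ∈ L := LieSubalgebra.subset_lieSpan (by simp)
  refine le_antisymm (LieSubalgebra.lieSpan_le.2 ?_) (SpecialLinear.sl_le_of_single_mem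
    fun _ _ hij => single_mem_of_single_castSucc_succ_mem
      (single_castSucc_succ_mem hm hML hNL) hNL hij)
  rintro _ (rfl | rfl)
  · exact trace_upperShift
  · exact trace_single_eq_of_ne (Fin.last m) 0 1 (by simp [Fin.ext_iff]; omega)
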